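/- Let m ≥ 1 and let V' = { S ∈ M_{2m}(ℂ) : S = [[Z, W],[-W̄, Z̄]] for some Z, W ∈ M_m(ℂ), and Sᴴ = S } be the real vector space of Hermitian quaternion-type complex 2m×2m matrices (of real dimension m(2m-1)). For S ∈ V', the map T ↦ S·T·S maps V' to itself, and its determinant as an ℝ-linear endomorphism of V' equals (det S)^{2m-1} (note det S is real and nonnegative for S ∈ V'). -/

import Mathlib

open Matrix

/-- The real subspace of complex `2m × 2m` matrices of quaternion type
`[[Z, W], [-W̄, Z̄]]`. -/
noncomputable def quatMatrices (m : ℕ) :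
    Submodule ℝ (Matrix (Fin m ⊕ Fin m) (Fin m ⊕ Fin m) ℂ) where
  carrier := {S | ∃ Z W : Matrix (Fin m) (Fin m) ℂ,
    S = Matrix.fromBlocks Z W (-(W.map (starRingEnd ℂ))) (Z.map (starRingEnd ℂ))}
  add_mem' := by
    rintro a b ⟨Z1, W1, rfl⟩ ⟨Z2, W2, rfl⟩
    refine ⟨Z1 + Z2, W1 + W2, ?_⟩
    rw [Matrix.fromBlocks_add,
      Matrix.map_add (starRingEnd ℂ) (fun a b => by simp) Z1 Z2,
      Matrix.map_add (starRingEnd ℂ) (fun a b => by simp) W1 W2, neg_add]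
  zero_mem' := by
    refine ⟨0, 0, ?_⟩
    ext i j
    cases i <;> cases j <;> simp
  smul_mem' := by
    rintro c a ⟨Z, W, rfl⟩
    refine ⟨c • Z, c • W, ?_⟩
    ext i j
    cases i <;> cases j <;>
      simp [Matrix.smul_apply, Matrix.map_apply, Matrix.neg_apply, Complex.real_smul,
        _root_.map_mul, Complex.conj_ofReal]


/-- The real subspace of Hermitian complex matrices (over an arbitrary index type). -/
noncomputable def hermMatrices' (n : Type*) : Submodule ℝ (Matrix n n ℂ) where
  carrier := {X | Xᴴ = X}
  add_mem' := by
    intro a b ha hb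
    simp only [Set.mem_setOf_eq] at *
    rw [Matrix.conjTranspose_add, ha, hb]
  zero_mem' := Matrix.conjTranspose_zero
  smul_mem' := by
    intro c a ha
    simp only [Set.mem_setOf_eq] at *
    rw [Matrix.conjTranspose_smul, star_trivial, ha]


/-!
Right multiplication by `J = [[0, 1], [-1, 0]]` turns a Hermitian quaternion-type matrix `T` into
the skew-symmetric matrix `T J`, and `(S T S) J = S (T J) Sᵀ` because `S J = J Sᵀ`. The image of `V'`
is a real form of the space of complex skew-symmetric `2m × 2m` matrices, so the real determinant
of `T ↦ S T S` on `V'` is the complex determinant of the congruence `A ↦ S A Sᵀ` on skew-symmetric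
matrices. For Hermitian `S` the spectral theorem reduces that to diagonal `S = diag d`, where
`E_ij - E_ji` is an eigenvector with eigenvalue `d_i d_j`, and `∏_{i<j} d_i d_j = (∏ d_i)^(2m-1)`.
-/

open Matrix Complex ComplexStarModule

section SkewSymm

variable (n R : Type*) [CommRing R]

def skewSymmMatrices : Submodule R (Matrix n n R) where
  carrier := {A | Aᵀ = -A}
  add_mem' {A B} hA hB := by simp_all [add_comm]
  zero_mem' := by simp
  smul_mem' c A hA := by simp_all

variable {n R}

theorem mem_skewSymmMatrices {A : Matrix n n R} : A ∈ skewSymmMatrices n R ↔ Aᵀ = -A := Iff.rfl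

theorem mul_mul_transpose_mem_skewSymmMatrices [Fintype n] (X : Matrix n n R) {A : Matrix n n R}
    (hA : A ∈ skewSymmMatrices n R) : X * A * Xᵀ ∈ skewSymmMatrices n R := by
  rw [mem_skewSymmMatrices] at hA ⊢
  simp [transpose_mul, hA, Matrix.mul_assoc]

theorem conjTranspose_mem_skewSymmMatrices [StarRing R] {A : Matrix n n R}
    (hA : A ∈ skewSymmMatrices n R) : Aᴴ ∈ skewSymmMatrices n R := by
  ext i j
  simpa using congrArg star (congrFun₂ hA j i)

open scoped CharZero in
theorem diag_eq_zero_of_mem_skewSymmMatrices [NoZeroDivisors R] [CharZero R] {A : Matrix n n R}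
    (hA : A ∈ skewSymmMatrices n R) (i : n) : A i i = 0 := by
  simpa using congrFun₂ hA i i

variable [Fintype n] [DecidableEq n]

noncomputable def skewCongr : Matrix n n R →* Module.End R (skewSymmMatrices n R) where
  toFun X :=
    { toFun A := ⟨X * A * Xᵀ, mul_mul_transpose_mem_skewSymmMatrices X A.2⟩
      map_add' A B := by ext1; simp [Matrix.mul_add, Matrix.add_mul]
      map_smul' c A := by ext1; simp }
  map_one' := by ext1; simp
  map_mul' X Y := by ext; simp [transpose_mul, Matrix.mul_assoc]

theorem skewCongr_apply_coe (X : Matrix n n R) (A : skewSymmMatrices n R) :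
    (skewCongr X A : Matrix n n R) = X * A * Xᵀ := rfl

end SkewSymm

theorem Fintype.prod_lt_pairs_mul_eq_pow {n M : Type*} [Fintype n] [LinearOrder n] [CommMonoid M]
    (d : n → M) :
    ∏ p : {p : n × n // p.1 < p.2}, d p.1.1 * d p.1.2 = (∏ i, d i) ^ (Fintype.card n - 1) := by
  have hsub (f : n × n → M) :
      ∏ p : {p : n × n // p.1 < p.2}, f p = ∏ i, ∏ j, if i < j then f (i, j) else 1 := by
    rw [← Finset.prod_subtype (Finset.univ.filter fun p : n × n => p.1 < p.2) (by simp),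
      Finset.prod_filter, Fintype.prod_prod_type]
  have hpair (i j : n) :
      (if i < j then d i else 1) * (if j < i then d i else 1) = if j ≠ i then d i else 1 := by
    rcases lt_trichotomy j i with h | rfl | h
    · simp [h, h.ne, h.not_gt]
    · simp
    · simp [h, h.ne', h.not_gt]
  have hrow (i : n) : ∏ j, (if j ≠ i then d i else 1) = d i ^ (Fintype.card n - 1) := by
    rw [Finset.prod_ite, Finset.prod_const_one, mul_one, Finset.prod_const, Finset.filter_ne',
      Finset.card_erase_of_mem (Finset.mem_univ i), Finset.card_univ]
  rw [Finset.prod_mul_distrib, hsub (fun p => d p.1), hsub (fun p => d p.2),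
    Finset.prod_comm (f := fun i j => if i < j then d j else 1), ← Finset.prod_mul_distrib,
    ← Finset.prod_pow]
  refine Finset.prod_congr rfl fun i _ => ?_
  rw [← Finset.prod_mul_distrib, ← hrow]
  exact Finset.prod_congr rfl fun j _ => hpair i j

section Diagonal

variable {n R : Type*} [CommRing R] [NoZeroDivisors R] [CharZero R]

noncomputable def skewSymmEquivUpper [LinearOrder n] :
    skewSymmMatrices n R ≃ₗ[R] ({p : n × n // p.1 < p.2} → R) where
  toFun A p := (A : Matrix n n R) p.1.1 p.1.2
  invFun c := ⟨Matrix.of fun i j =>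
      if h : i < j then c ⟨(i, j), h⟩ else if h' : j < i then -c ⟨(j, i), h'⟩ else 0, by
    ext i j
    rcases lt_trichotomy i j with h | rfl | h
    · simp [h, h.not_gt]
    · simp
    · simp [h, h.not_gt]⟩
  map_add' A B := by ext; simp
  map_smul' c A := by ext; simp
  left_inv A := by
    have hA := A.2
    ext i j
    rcases lt_trichotomy i j with h | rfl | h
    · simp [h]
    · simp [diag_eq_zero_of_mem_skewSymmMatrices hA]
    · simpa [h, h.not_gt] using (congrFun₂ hA j i).symm
  right_inv c := by ext p; simp [p.2]

theorem det_skewCongr_diagonal [Fintype n] [DecidableEq n] (d : n → R) :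
    LinearMap.det (skewCongr (diagonal d)) = (∏ i, d i) ^ (Fintype.card n - 1) := by
  -- any linear order will do: it only serves to index a basis by the pairs `i < j`
  let : LinearOrder n := LinearOrder.lift' _ (Fintype.equivFin n).injective
  let b := Module.Basis.ofEquivFun (skewSymmEquivUpper (n := n) (R := R))
  have hb : LinearMap.toMatrix b b (skewCongr (diagonal d)) =
      diagonal fun p => d p.1.1 * d p.1.2 := by
    ext p q
    simp [b, LinearMap.toMatrix_apply, skewSymmEquivUpper, skewCongr_apply_coe, p.2,
      diagonal_apply, Pi.single_apply, eq_comm]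
  rw [← LinearMap.det_toMatrix b, hb, det_diagonal, Fintype.prod_lt_pairs_mul_eq_pow]

end Diagonal

theorem MonoidHom.map_unitary_mul_mul_star {A M : Type*} [Monoid A] [StarMul A] [CommMonoid M]
    (f : A →* M) (U : unitary A) (x : A) : f (U * x * (star U : unitary A)) = f x := by
  rw [map_mul, map_mul, mul_right_comm, ← map_mul, Unitary.coe_mul_star_self, map_one, one_mul]

theorem det_skewCongr_of_isHermitian {n 𝕜 : Type*} [Fintype n] [DecidableEq n] [RCLike 𝕜]
    {X : Matrix n n 𝕜} (hX : X.IsHermitian) :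
    LinearMap.det (skewCongr X) = X.det ^ (Fintype.card n - 1) := by
  rw [hX.det_eq_prod_eigenvalues, ← det_skewCongr_diagonal]
  conv_lhs => rw [hX.spectral_theorem, Unitary.conjStarAlgAut_apply]
  exact (LinearMap.det.comp skewCongr : Matrix n n 𝕜 →* 𝕜).map_unitary_mul_mul_star _ _

theorem Module.Basis.algebraMap_det_eq_det_of_intertwining {K L V W ι : Type*} [CommRing K]
    [CommRing L] [Algebra K L] [AddCommGroup V] [Module K V] [AddCommGroup W] [Module L W]
    [Module K W] [IsScalarTower K L W] [Fintype ι] [DecidableEq ι] (b : Basis ι K V)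
    (c : Basis ι L W) (ψ : V →ₗ[K] W) (hc : ∀ i, c i = ψ (b i)) {P : V →ₗ[K] V}
    {Q : W →ₗ[L] W} (h : ∀ v, Q (ψ v) = ψ (P v)) :
    algebraMap K L (LinearMap.det P) = LinearMap.det Q := by
  have hrepr (v : V) (i : ι) : c.repr (ψ v) i = algebraMap K L (b.repr v i) := by
    have hψv : ψ v = ∑ k, algebraMap K L (b.repr v k) • c k := by
      conv_lhs => rw [← b.sum_repr v]
      simp only [map_sum, map_smul, hc, algebraMap_smul]
    rw [hψv, c.repr_sum_self]
  rw [← LinearMap.det_toMatrix b, ← LinearMap.det_toMatrix c, RingHom.map_det]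
  congr 1
  ext i j
  simp [LinearMap.toMatrix_apply, hc, h, hrepr]

section RealForm

variable {V W : Type*} [AddCommGroup V] [Module ℝ V] [AddCommGroup W] [Module ℂ W] [Module ℝ W]
  [IsScalarTower ℝ ℂ W]

theorem LinearMap.sum_smul_apply_eq_add_I_smul {ι : Type*} (ψ : V →ₗ[ℝ] W) (s : Finset ι)
    (g : ι → ℂ) (v : ι → V) :
    ∑ i ∈ s, g i • ψ (v i) = ψ (∑ i ∈ s, (g i).re • v i) + I • ψ (∑ i ∈ s, (g i).im • v i) := by
  simp only [map_sum, map_smul, Finset.smul_sum, ← Finset.sum_add_distrib]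
  refine Finset.sum_congr rfl fun i _ => ?_
  rw [← algebraMap_smul ℂ (g i).re, ← algebraMap_smul ℂ (g i).im, smul_smul, ← add_smul]
  congr 1
  simpa [mul_comm] using (re_add_im (g i)).symm

/-- `ψ` extends to an isomorphism `ℂ ⊗[ℝ] V ≃ₗ[ℂ] W`. -/
structure IsRealForm (ψ : V →ₗ[ℝ] W) : Prop where
  eq_zero_of_add_I_smul : ∀ x y, ψ x + I • ψ y = 0 → x = 0 ∧ y = 0
  exists_add_I_smul : ∀ w, ∃ x y, ψ x + I • ψ y = w

namespace IsRealForm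

variable {ψ : V →ₗ[ℝ] W} (hψ : IsRealForm ψ) {ι : Type*}
include hψ

theorem linearIndependent {b : ι → V} (hb : LinearIndependent ℝ b) :
    LinearIndependent ℂ (ψ ∘ b) := by
  rw [linearIndependent_iff'] at hb ⊢
  intro s g hg i hi
  obtain ⟨hre, him⟩ := hψ.eq_zero_of_add_I_smul _ _ (ψ.sum_smul_apply_eq_add_I_smul s g b ▸ hg)
  exact Complex.ext (hb s _ hre i hi) (hb s _ him i hi :)

theorem span_eq_top {b : ι → V} (hb : Submodule.span ℝ (Set.range b) = ⊤) :
    Submodule.span ℂ (Set.range (ψ ∘ b)) = ⊤ := by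
  have hspan (x : V) : ψ x ∈ Submodule.span ℂ (Set.range (ψ ∘ b)) := by
    have hx : ψ x ∈ (Submodule.span ℝ (Set.range b)).map ψ :=
      Submodule.mem_map_of_mem (hb ▸ Submodule.mem_top)
    rw [Submodule.map_span, ← Set.range_comp] at hx
    exact Submodule.span_le_restrictScalars ℝ ℂ _ hx
  refine Submodule.eq_top_iff'.2 fun w => ?_
  obtain ⟨x, y, rfl⟩ := hψ.exists_add_I_smul w
  exact add_mem (hspan x) (Submodule.smul_mem _ _ (hspan y))

noncomputable def basis (b : Module.Basis ι ℝ V) : Module.Basis ι ℂ W :=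
  .mk (hψ.linearIndependent b.linearIndependent) (hψ.span_eq_top b.span_eq).ge

theorem basis_apply (b : Module.Basis ι ℝ V) (i : ι) : hψ.basis b i = ψ (b i) :=
  Module.Basis.mk_apply _ _ _

theorem algebraMap_det_eq_det [FiniteDimensional ℝ V] {P : V →ₗ[ℝ] V} {Q : W →ₗ[ℂ] W}
    (h : ∀ v, Q (ψ v) = ψ (P v)) : algebraMap ℝ ℂ (LinearMap.det P) = LinearMap.det Q :=
  let b := Module.finBasis ℝ V
  b.algebraMap_det_eq_det_of_intertwining (hψ.basis b) ψ (hψ.basis_apply b) h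

end IsRealForm

end RealForm

section StarModule

variable {A : Type*} [AddCommGroup A] [Module ℂ A] [StarAddMonoid A] [StarModule ℂ A]

theorem IsSelfAdjoint.eq_zero_of_add_I_smul_eq_zero {x y : A} (hx : IsSelfAdjoint x)
    (hy : IsSelfAdjoint y) (h : x + I • y = 0) : x = 0 ∧ y = 0 := by
  have hre := congrArg (fun a => (ℜ a : A)) h
  have him := congrArg (fun a => (ℑ a : A)) h
  simp [hx.coe_realPart, hy.coe_realPart, hx.imaginaryPart, hy.imaginaryPart] at hre him
  exact ⟨hre, him⟩

theorem Submodule.coe_realPart_mem_and_coe_imaginaryPart_mem (C : Submodule ℂ A)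
    (hC : ∀ a ∈ C, star a ∈ C) {a : A} (ha : a ∈ C) :
    (ℜ a : A) ∈ C ∧ (ℑ a : A) ∈ C := by
  rw [realPart_apply_coe, imaginaryPart_apply_coe]
  exact ⟨C.smul_of_tower_mem _ (C.add_mem ha (hC a ha)),
    C.smul_mem _ (C.smul_of_tower_mem _ (C.sub_mem ha (hC a ha)))⟩

end StarModule

section Quaternionic

variable {m : ℕ}

def quatJ (m : ℕ) : Matrix (Fin m ⊕ Fin m) (Fin m ⊕ Fin m) ℂ := fromBlocks 0 1 (-1) 0

theorem quatJ_mul_quatJ : quatJ m * quatJ m = -1 := by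
  simp [quatJ, fromBlocks_multiply]
  rw [← fromBlocks_one, fromBlocks_neg, neg_zero]

theorem quatJ_transpose : (quatJ m)ᵀ = -quatJ m := by
  simp [quatJ, fromBlocks_transpose, fromBlocks_neg]

theorem quatJ_conjTranspose : (quatJ m)ᴴ = -quatJ m := by
  simp [quatJ, fromBlocks_conjTranspose, fromBlocks_neg]

theorem mem_quatMatrices_iff {S : Matrix (Fin m ⊕ Fin m) (Fin m ⊕ Fin m) ℂ} :
    S ∈ quatMatrices m ↔ S * quatJ m = quatJ m * S.map (starRingEnd ℂ) := by
  obtain ⟨A, B, C, D, rfl⟩ : ∃ A B C D, S = fromBlocks A B C D :=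
    ⟨_, _, _, _, (fromBlocks_toBlocks S).symm⟩
  simp only [quatMatrices, Submodule.mem_mk, AddSubmonoid.mem_mk, AddSubsemigroup.mem_mk,
    Set.mem_ofPred_eq, fromBlocks_inj, exists_and_left, exists_eq_left',
    quatJ, fromBlocks_multiply, fromBlocks_map, mul_zero, mul_neg, mul_one, zero_add, add_zero,
    zero_mul, one_mul, neg_mul, neg_inj]
  refine ⟨fun ⟨hC, hD⟩ => ⟨?_, ?_, hD, hC⟩, fun ⟨_, _, hD, hC⟩ => ⟨hC, hD⟩⟩ <;>
    ext <;> simp [hC, hD]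


theorem mem_quatHerm_iff {T : Matrix (Fin m ⊕ Fin m) (Fin m ⊕ Fin m) ℂ} :
    T ∈ quatMatrices m ⊓ hermMatrices' (Fin m ⊕ Fin m) ↔
      IsSelfAdjoint T ∧ T * quatJ m ∈ skewSymmMatrices (Fin m ⊕ Fin m) ℂ := by
  rw [Submodule.mem_inf, mem_quatMatrices_iff, and_comm]
  refine and_congr_right fun hT => ?_
  have hmap : T.map (starRingEnd ℂ) = Tᵀ := by
    ext i j
    simpa using congrFun₂ hT j i
  rw [hmap, mem_skewSymmMatrices, transpose_mul, quatJ_transpose, Matrix.neg_mul, neg_inj, eq_comm]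

theorem quatJ_mul_transpose {S : Matrix (Fin m ⊕ Fin m) (Fin m ⊕ Fin m) ℂ}
    (hS : S ∈ quatMatrices m ⊓ hermMatrices' (Fin m ⊕ Fin m)) : quatJ m * Sᵀ = S * quatJ m := by
  have := (mem_quatHerm_iff.1 hS).2
  rwa [mem_skewSymmMatrices, transpose_mul, quatJ_transpose, Matrix.neg_mul, neg_inj] at this

theorem mul_mul_mem_quatHerm {S T : Matrix (Fin m ⊕ Fin m) (Fin m ⊕ Fin m) ℂ}
    (hS : S ∈ quatMatrices m ⊓ hermMatrices' (Fin m ⊕ Fin m))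
    (hT : T ∈ quatMatrices m ⊓ hermMatrices' (Fin m ⊕ Fin m)) :
    S * T * S ∈ quatMatrices m ⊓ hermMatrices' (Fin m ⊕ Fin m) := by
  obtain ⟨hS_sa, -⟩ := mem_quatHerm_iff.1 hS
  obtain ⟨hT_sa, hTJ⟩ := mem_quatHerm_iff.1 hT
  refine mem_quatHerm_iff.2 ⟨?_, ?_⟩
  · simpa [hS_sa.star_eq] using hT_sa.conjugate S
  · rw [Matrix.mul_assoc, ← quatJ_mul_transpose hS, ← Matrix.mul_assoc, Matrix.mul_assoc S T]
    exact mul_mul_transpose_mem_skewSymmMatrices S hTJ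

theorem conjTranspose_mul_quatJ_mem {T : Matrix (Fin m ⊕ Fin m) (Fin m ⊕ Fin m) ℂ}
    (hT : T * quatJ m ∈ skewSymmMatrices (Fin m ⊕ Fin m) ℂ) :
    Tᴴ * quatJ m ∈ skewSymmMatrices (Fin m ⊕ Fin m) ℂ := by
  have h : Tᴴ * quatJ m = -(quatJ m * (T * quatJ m)ᴴ * (quatJ m)ᵀ) := by
    simp only [conjTranspose_mul, quatJ_conjTranspose, quatJ_transpose, Matrix.neg_mul,
      Matrix.mul_neg, neg_neg, ← Matrix.mul_assoc, quatJ_mul_quatJ, Matrix.one_mul]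
  rw [h]
  exact neg_mem (mul_mul_transpose_mem_skewSymmMatrices _ (conjTranspose_mem_skewSymmMatrices hT))

noncomputable def mulQuatJ (m : ℕ) :
    ↥(quatMatrices m ⊓ hermMatrices' (Fin m ⊕ Fin m)) →ₗ[ℝ] skewSymmMatrices (Fin m ⊕ Fin m) ℂ where
  toFun T := ⟨T * quatJ m, (mem_quatHerm_iff.1 T.2).2⟩
  map_add' _ _ := Subtype.ext (Matrix.add_mul _ _ _)
  map_smul' _ _ := Subtype.ext (Matrix.smul_mul _ _ _)

theorem mulQuatJ_apply_coe (T : ↥(quatMatrices m ⊓ hermMatrices' (Fin m ⊕ Fin m))) :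
    (mulQuatJ m T : Matrix (Fin m ⊕ Fin m) (Fin m ⊕ Fin m) ℂ) = T * quatJ m := rfl

theorem isRealForm_mulQuatJ : IsRealForm (mulQuatJ m) where
  eq_zero_of_add_I_smul X Y h := by
    have hJ : (↑X + I • (Y : Matrix (Fin m ⊕ Fin m) (Fin m ⊕ Fin m) ℂ)) * quatJ m = 0 := by
      simpa [Matrix.add_mul, mulQuatJ_apply_coe] using congrArg Subtype.val h
    have hXY : ↑X + I • (Y : Matrix (Fin m ⊕ Fin m) (Fin m ⊕ Fin m) ℂ) = 0 := by
      rw [← neg_neg (_ + _), ← mul_neg_one (_ + _), ← quatJ_mul_quatJ, ← Matrix.mul_assoc, hJ,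
        Matrix.zero_mul, neg_zero]
    obtain ⟨hX, hY⟩ := (mem_quatHerm_iff.1 X.2).1.eq_zero_of_add_I_smul_eq_zero
      (mem_quatHerm_iff.1 Y.2).1 hXY
    exact ⟨Subtype.ext hX, Subtype.ext hY⟩
  exists_add_I_smul A := by
    set T := -((A : Matrix (Fin m ⊕ Fin m) (Fin m ⊕ Fin m) ℂ) * quatJ m)
    have hTJ : T * quatJ m = A := by simp [T, Matrix.mul_assoc, quatJ_mul_quatJ]
    let C := (skewSymmMatrices (Fin m ⊕ Fin m) ℂ).comap (LinearMap.mulRight ℂ (quatJ m))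
    obtain ⟨hre, him⟩ := C.coe_realPart_mem_and_coe_imaginaryPart_mem
      (fun _ => conjTranspose_mul_quatJ_mem) (Submodule.mem_comap.2 (hTJ ▸ A.2))
    refine ⟨⟨ℜ T, mem_quatHerm_iff.2 ⟨(ℜ T).2, hre⟩⟩, ⟨ℑ T, mem_quatHerm_iff.2 ⟨(ℑ T).2, him⟩⟩,
      Subtype.ext ?_⟩
    change (ℜ T : Matrix _ _ ℂ) * quatJ m + I • ((ℑ T : Matrix _ _ ℂ) * quatJ m) =
      (A : Matrix _ _ ℂ)
    rw [← Matrix.smul_mul, ← Matrix.add_mul, realPart_add_I_smul_imaginaryPart, hTJ]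

end Quaternionic

theorem stmt_15_general (m : ℕ)
    (S : Matrix (Fin m ⊕ Fin m) (Fin m ⊕ Fin m) ℂ)
    (hS : S ∈ quatMatrices m ⊓ hermMatrices' (Fin m ⊕ Fin m)) :
    (∀ T ∈ quatMatrices m ⊓ hermMatrices' (Fin m ⊕ Fin m),
      S * T * S ∈ quatMatrices m ⊓ hermMatrices' (Fin m ⊕ Fin m))
    ∧ ∀ P : ↥(quatMatrices m ⊓ hermMatrices' (Fin m ⊕ Fin m)) →ₗ[ℝ]
          ↥(quatMatrices m ⊓ hermMatrices' (Fin m ⊕ Fin m)),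
        (∀ T : ↥(quatMatrices m ⊓ hermMatrices' (Fin m ⊕ Fin m)),
          (P T : Matrix (Fin m ⊕ Fin m) (Fin m ⊕ Fin m) ℂ)
            = S * (T : Matrix (Fin m ⊕ Fin m) (Fin m ⊕ Fin m) ℂ) * S) →
        ((LinearMap.det P : ℝ) : ℂ) = S.det ^ (2 * m - 1) := by
  refine ⟨fun T hT => mul_mul_mem_quatHerm hS hT, fun P hP => ?_⟩
  have hPQ (T : ↥(quatMatrices m ⊓ hermMatrices' (Fin m ⊕ Fin m))) :
      skewCongr S (mulQuatJ m T) = mulQuatJ m (P T) := by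
    ext1
    simp only [skewCongr_apply_coe, mulQuatJ_apply_coe, hP, Matrix.mul_assoc,
      ← quatJ_mul_transpose hS]
  have hS_herm : S.IsHermitian := (mem_quatHerm_iff.1 hS).1
  rw [← Complex.coe_algebraMap, isRealForm_mulQuatJ.algebraMap_det_eq_det hPQ,
    det_skewCongr_of_isHermitian hS_herm]
  simp [two_mul]

/-- For `S` a Hermitian quaternion-type complex `2m × 2m` matrix, the map
`T ↦ S·T·S` maps the space `V'` of Hermitian quaternion-type matrices to itself, and its
determinant as an ℝ-linear endomorphism of `V'` equals `(det S)^(2m-1)`. -/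
theorem stmt_15 (m : ℕ) (hm : 1 ≤ m)
    (S : Matrix (Fin m ⊕ Fin m) (Fin m ⊕ Fin m) ℂ)
    (hS : S ∈ quatMatrices m ⊓ hermMatrices' (Fin m ⊕ Fin m)) :
    (∀ T ∈ quatMatrices m ⊓ hermMatrices' (Fin m ⊕ Fin m),
      S * T * S ∈ quatMatrices m ⊓ hermMatrices' (Fin m ⊕ Fin m))
    ∧ ∀ P : ↥(quatMatrices m ⊓ hermMatrices' (Fin m ⊕ Fin m)) →ₗ[ℝ]
          ↥(quatMatrices m ⊓ hermMatrices' (Fin m ⊕ Fin m)),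
        (∀ T : ↥(quatMatrices m ⊓ hermMatrices' (Fin m ⊕ Fin m)),
          (P T : Matrix (Fin m ⊕ Fin m) (Fin m ⊕ Fin m) ℂ)
            = S * (T : Matrix (Fin m ⊕ Fin m) (Fin m ⊕ Fin m) ℂ) * S) →
        ((LinearMap.det P : ℝ) : ℂ) = S.det ^ (2 * m - 1) :=
  stmt_15_general m S hS
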